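/- arXiv:1308.2418 — 6 statements merged into one kernel-verified Lean document; each statement's English description precedes it below -/
import Mathlib

section
/- For all real numbers 0 < x₁ ≤ x₂ and all q with 0 < q < 1, one has x₂^q - x₁^q ≥ (q/(1-q)) · x₁ · (x₁^{q-1} - x₂^{q-1}). -/
theorem stmt_1 (x₁ x₂ q : ℝ) (hx₁ : 0 < x₁) (hx : x₁ ≤ x₂) (hq0 : 0 < q) (hq1 : q < 1) :
    x₂ ^ q - x₁ ^ q ≥ q / (1 - q) * (x₁ * (x₁ ^ (q - 1) - x₂ ^ (q - 1))) := by
  have hx₂ : 0 < x₂ := lt_of_lt_of_le hx₁ hx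
  have hq1' : (0:ℝ) < 1 - q := by linarith
  rw [ge_iff_le, div_mul_eq_mul_div, div_le_iff₀ hq1']
  have key := Real.geom_mean_le_arith_mean2_weighted (w₁ := 1-q) (w₂ := q)
    (p₁ := x₂^q) (p₂ := x₁*x₂^(q-1)) (by linarith) hq0.le (by positivity) (by positivity)
    (by ring)
  have hlhs : (x₂^q)^(1-q) * (x₁*x₂^(q-1))^q = x₁^q := by
    rw [Real.mul_rpow hx₁.le (by positivity)]
    rw [← Real.rpow_mul hx₂.le, ← Real.rpow_mul hx₂.le]
    rw [show (x₂ ^ (q * (1 - q)) * (x₁ ^ q * x₂ ^ ((q - 1) * q))) =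
        x₁ ^ q * (x₂ ^ (q * (1 - q)) * x₂ ^ ((q - 1) * q)) by ring]
    rw [← Real.rpow_add hx₂]
    rw [show q * (1 - q) + (q - 1) * q = 0 by ring, Real.rpow_zero, mul_one]
  rw [hlhs] at key
  have h1 : x₁ * x₁^(q-1) = x₁^q := by
    nth_rewrite 1 [← Real.rpow_one x₁]
    rw [← Real.rpow_add hx₁]; ring_nf
  have h2 : x₁ * (x₁^(q-1) - x₂^(q-1)) = x₁^q - x₁*x₂^(q-1) := by
    rw [mul_sub, h1]
  rw [h2]
  nlinarith [key]
end

section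
/- Let (aᵢ) be a nondecreasing finite sequence of nonnegative reals with a₀ = 0, and let q > 1. Then the discrete Stieltjes sum ∑_{i=0}^{n-1} aᵢ (a_{i+1}^{q-1} - aᵢ^{q-1}) is at most ((q-1)/q) · aₙ^q. -/
/-!
Young's inequality with the exponents `q` and `q / (q - 1)` bounds each summand by
`((q-1)/q) (a_{i+1}^q - aᵢ^q)`, and these bounds telescope to `((q-1)/q) aₙ^q` since `a₀ = 0`.
-/

open Finset Real

theorem Fin.sum_univ_succ_sub_castSucc {M : Type*} [AddCommGroup M] (n : ℕ) (f : Fin (n + 1) → M) :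
    ∑ i : Fin n, (f i.succ - f i.castSucc) = f (Fin.last n) - f 0 := by
  rw [sum_sub_distrib, sub_eq_sub_iff_add_eq_add, add_comm, ← Fin.sum_univ_succ,
    add_comm (f (Fin.last n)), ← Fin.sum_univ_castSucc]

namespace Real

variable {x y q : ℝ}

theorem mul_rpow_sub_one_le (hx : 0 ≤ x) (hy : 0 ≤ y) (hq : 1 < q) :
    x * y ^ (q - 1) ≤ x ^ q / q + (q - 1) / q * y ^ q := by
  have hq1 : q - 1 ≠ 0 := by linarith
  have young := young_inequality_of_nonneg hx (rpow_nonneg hy (q - 1)) (.conjExponent hq)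
  rwa [← rpow_mul hy, conjExponent, mul_div_cancel₀ _ hq1, div_div_eq_mul_div, mul_div_assoc,
    mul_comm (y ^ q)] at young

theorem mul_rpow_sub_one_sub_le (hx : 0 ≤ x) (hy : 0 ≤ y) (hq : 1 < q) :
    x * (y ^ (q - 1) - x ^ (q - 1)) ≤ (q - 1) / q * (y ^ q - x ^ q) := by
  have hq0 : q ≠ 0 := by linarith
  have hxq : x * x ^ (q - 1) = x ^ q := by
    rw [← rpow_one_add' hx (by linarith), add_sub_cancel]
  have hsplit : (q - 1) / q * x ^ q = x ^ q - x ^ q / q := by field_simp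
  linarith [mul_rpow_sub_one_le hx hy hq]

end Real

theorem stmt_2_general (n : ℕ) (a : Fin (n + 1) → ℝ) (h0 : a 0 = 0)
    (hnonneg : ∀ i, 0 ≤ a i) (q : ℝ) (hq : 1 < q) :
    ∑ i : Fin n, a i.castSucc * (a i.succ ^ (q - 1) - a i.castSucc ^ (q - 1)) ≤
      (q - 1) / q * a (Fin.last n) ^ q := by
  calc ∑ i : Fin n, a i.castSucc * (a i.succ ^ (q - 1) - a i.castSucc ^ (q - 1))
      ≤ ∑ i : Fin n, (q - 1) / q * (a i.succ ^ q - a i.castSucc ^ q) :=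
        sum_le_sum fun i _ => mul_rpow_sub_one_sub_le (hnonneg _) (hnonneg _) hq
    _ = (q - 1) / q * (a (Fin.last n) ^ q - a 0 ^ q) := by
        rw [← mul_sum, Fin.sum_univ_succ_sub_castSucc n fun j => a j ^ q]
    _ = (q - 1) / q * a (Fin.last n) ^ q := by
        rw [h0, zero_rpow (by linarith), sub_zero]

theorem stmt_2 (n : ℕ) (a : Fin (n + 1) → ℝ) (ha : Monotone a) (h0 : a 0 = 0)
    (hnonneg : ∀ i, 0 ≤ a i) (q : ℝ) (hq : 1 < q) :
    ∑ i : Fin n, a i.castSucc * (a i.succ ^ (q - 1) - a i.castSucc ^ (q - 1)) ≤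
      (q - 1) / q * a (Fin.last n) ^ q :=
  stmt_2_general n a h0 hnonneg q hq
end

section
/- Let (Ω, F, (Fₙ), P) be a discrete-time filtered probability space and let V : ℕ → Ω → ℝ be an adapted nondecreasing integrable process with V₀ = 0, with predictable compensator Ṽ (so Ṽₙ = ∑_{k<n} E[V_{k+1} − V_k | F_k]). Then for every p ∈ [1, ∞), ‖Ṽ_∞‖_{L_p} ≤ p ‖V_∞‖_{L_p}. -/
/-!
The compensator `Ṽ` of a nondecreasing `V` is itself nondecreasing and predictable, and it lies in
`L_p` whenever `V_n` does, because conditional expectation contracts `L_p`. For a nondecreasing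
sequence starting at `0`, convexity of `t ↦ t ^ p` gives
`b_n ^ p ≤ p ∑_{k<n} (b_{k+1} - b_k) b_{k+1} ^ (p-1)`. Applied to `Ṽ`, the weight
`Ṽ_{k+1} ^ (p-1)` is `𝒢_k`-measurable, so in expectation the increment
`Ṽ_{k+1} - Ṽ_k = E[V_{k+1} - V_k | 𝒢_k]` may be replaced by `V_{k+1} - V_k`. Bounding the weight
by `Ṽ_n ^ (p-1)` and summing gives `E[Ṽ_n ^ p] ≤ p E[V_n Ṽ_n ^ (p-1)] ≤ p ‖V_n‖_p ‖Ṽ_n‖_p ^ (p-1)`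
by Hölder, and one divides by the finite quantity `‖Ṽ_n‖_p ^ (p-1)`.
-/

open MeasureTheory Finset
open scoped ENNReal

theorem Real.rpow_sub_rpow_le_mul_rpow_sub_one {p x y : ℝ} (hp : 1 ≤ p) (hx : 0 ≤ x) (hxy : x ≤ y) :
    y ^ p - x ^ p ≤ p * (y - x) * y ^ (p - 1) := by
  rcases hxy.eq_or_lt with rfl | hlt
  · simp
  obtain ⟨c, ⟨hxc, hcy⟩, hc⟩ := exists_hasDerivAt_eq_slope (fun t => t ^ p)
    (fun t => p * t ^ (p - 1)) hlt (Real.continuous_rpow_const (by linarith)).continuousOn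
    fun t _ => Real.hasDerivAt_rpow_const (Or.inr hp)
  have hmvt : y ^ p - x ^ p = p * (y - x) * c ^ (p - 1) := by
    rw [mul_right_comm, hc, div_mul_cancel₀ _ (sub_ne_zero.2 hlt.ne')]
  rw [hmvt]
  gcongr
  linarith

theorem Real.rpow_le_sum_mul_rpow_sub_one {p : ℝ} (hp : 1 ≤ p) {b : ℕ → ℝ} (hb : Monotone b)
    (h0 : b 0 = 0) (n : ℕ) :
    b n ^ p ≤ p * ∑ k ∈ range n, (b (k + 1) - b k) * b (k + 1) ^ (p - 1) := by
  have htel : b n ^ p = ∑ k ∈ range n, (b (k + 1) ^ p - b k ^ p) := by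
    rw [sum_range_sub (fun k => b k ^ p), h0, Real.zero_rpow (by linarith), sub_zero]
  rw [htel, mul_sum]
  refine sum_le_sum fun k _ => ?_
  rw [← mul_assoc]
  exact rpow_sub_rpow_le_mul_rpow_sub_one hp (h0 ▸ hb k.zero_le) (hb k.le_succ)

theorem Real.mul_rpow_sub_one_le_rpow_add_rpow {p x y : ℝ} (hp : 1 ≤ p) (hx : 0 ≤ x) (hy : 0 ≤ y) :
    x * y ^ (p - 1) ≤ x ^ p + y ^ p := by
  have hm : 0 ≤ max x y := le_max_of_le_left hx
  calc x * y ^ (p - 1) ≤ max x y * max x y ^ (p - 1) :=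
        mul_le_mul (le_max_left x y) (Real.rpow_le_rpow hy (le_max_right x y) (by linarith))
          (by positivity) hm
    _ = max x y ^ p := by
        rw [← Real.rpow_one_add' hm (by linarith)]; ring_nf
    _ ≤ x ^ p + y ^ p := by
        rcases le_total x y with h | h
        · rw [max_eq_right h]; linarith [Real.rpow_nonneg hx p]
        · rw [max_eq_left h]; linarith [Real.rpow_nonneg hy p]

namespace MeasureTheory

section Lp

variable {Ω : Type*} {mΩ : MeasurableSpace Ω} {μ : Measure Ω} {p : ℝ} {f g : Ω → ℝ}

theorem MemLp.integrable_mul_rpow_sub_one (hp : 1 ≤ p) (hf : MemLp f (.ofReal p) μ)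
    (hg : MemLp g (.ofReal p) μ) (hg0 : 0 ≤ᵐ[μ] g) :
    Integrable (fun ω => f ω * g ω ^ (p - 1)) μ := by
  have hp0 : ENNReal.ofReal p ≠ 0 := (ENNReal.ofReal_pos.2 (by linarith)).ne'
  have hbound := (hf.integrable_norm_rpow hp0 ENNReal.ofReal_ne_top).add
    (hg.integrable_norm_rpow hp0 ENNReal.ofReal_ne_top)
  rw [ENNReal.toReal_ofReal (by linarith)] at hbound
  refine hbound.mono' (hf.1.mul (hg.1.aemeasurable.pow_const _).aestronglyMeasurable) ?_
  filter_upwards [hg0] with ω hω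
  rw [Pi.add_apply, norm_mul, Real.norm_of_nonneg (Real.rpow_nonneg hω _),
    Real.norm_of_nonneg hω]
  exact Real.mul_rpow_sub_one_le_rpow_add_rpow hp (norm_nonneg _) hω

theorem integral_rpow_eq_lpNorm_rpow (hp : 0 < p) (hf0 : 0 ≤ᵐ[μ] f)
    (hf : AEStronglyMeasurable f μ) :
    ∫ ω, f ω ^ p ∂μ = lpNorm f (.ofReal p) μ ^ p := by
  have hnorm : ∫ ω, f ω ^ p ∂μ = ∫ ω, ‖f ω‖ ^ p ∂μ := integral_congr_ae <| by
    filter_upwards [hf0] with ω hω using by rw [Real.norm_of_nonneg hω]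
  rw [lpNorm_eq_integral_norm_rpow_toReal (by simpa using hp) ENNReal.ofReal_ne_top hf,
    ENNReal.toReal_ofReal hp.le, ← Real.rpow_mul (integral_nonneg fun _ => by positivity),
    inv_mul_cancel₀ hp.ne', Real.rpow_one, hnorm]

theorem integral_mul_rpow_sub_one_le_lpNorm (hp : 1 ≤ p) (hf0 : 0 ≤ᵐ[μ] f) (hg0 : 0 ≤ᵐ[μ] g)
    (hf : MemLp f (.ofReal p) μ) (hg : MemLp g (.ofReal p) μ) :
    ∫ ω, g ω * f ω ^ (p - 1) ∂μ ≤ lpNorm g (.ofReal p) μ * lpNorm f (.ofReal p) μ ^ (p - 1) := by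
  rcases hp.eq_or_lt with rfl | hp1
  · simpa using (integral_rpow_eq_lpNorm_rpow one_pos hg0 hg.1).le
  set q := p / (p - 1)
  have hpq : p.HolderConjugate q := (Real.holderConjugate_iff_eq_conjExponent hp1).2 rfl
  have hfq : MemLp (fun ω => f ω ^ (p - 1)) (.ofReal q) μ := by
    have h := hf.norm_rpow_div (.ofReal (p - 1))
    rw [ENNReal.toReal_ofReal hpq.sub_one_pos.le, ← ENNReal.ofReal_div_of_pos hpq.sub_one_pos] at h
    refine h.ae_eq ?_
    filter_upwards [hf0] with ω hω using by rw [Real.norm_of_nonneg hω]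
  calc ∫ ω, g ω * f ω ^ (p - 1) ∂μ
      ≤ (∫ ω, g ω ^ p ∂μ) ^ (1 / p) * (∫ ω, (f ω ^ (p - 1)) ^ q ∂μ) ^ (1 / q) :=
        integral_mul_le_Lp_mul_Lq_of_nonneg hpq hg0
          (by filter_upwards [hf0] with ω hω using Real.rpow_nonneg hω _) hg hfq
    _ = lpNorm g (.ofReal p) μ * lpNorm f (.ofReal p) μ ^ (p - 1) := by
        have hfpq : ∫ ω, (f ω ^ (p - 1)) ^ q ∂μ = ∫ ω, f ω ^ p ∂μ := integral_congr_ae <| by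
          filter_upwards [hf0] with ω hω
          rw [← Real.rpow_mul hω, hpq.sub_one_mul_conj]
        rw [hfpq, integral_rpow_eq_lpNorm_rpow hpq.pos hg0 hg.1,
          integral_rpow_eq_lpNorm_rpow hpq.pos hf0 hf.1, ← Real.rpow_mul lpNorm_nonneg,
          ← Real.rpow_mul lpNorm_nonneg, mul_one_div_cancel hpq.ne_zero, Real.rpow_one,
          mul_one_div, hpq.div_conj_eq_sub_one]

theorem eLpNorm_le_mul_eLpNorm_of_integral_rpow_le (hp : 1 ≤ p) {c : ℝ} (hc : 0 ≤ c)
    (hf0 : 0 ≤ᵐ[μ] f) (hg0 : 0 ≤ᵐ[μ] g) (hf : MemLp f (.ofReal p) μ) (hg : MemLp g (.ofReal p) μ)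
    (h : ∫ ω, f ω ^ p ∂μ ≤ c * ∫ ω, g ω * f ω ^ (p - 1) ∂μ) :
    eLpNorm f (.ofReal p) μ ≤ .ofReal c * eLpNorm g (.ofReal p) μ := by
  set a := lpNorm f (.ofReal p) μ
  set b := lpNorm g (.ofReal p) μ
  have hab : a ^ p ≤ c * b * a ^ (p - 1) := by
    rw [← integral_rpow_eq_lpNorm_rpow (by linarith) hf0 hf.1, mul_assoc]
    exact h.trans (mul_le_mul_of_nonneg_left
      (integral_mul_rpow_sub_one_le_lpNorm hp hf0 hg0 hf hg) hc)
  have hle : a ≤ c * b := by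
    rcases (lpNorm_nonneg : 0 ≤ a).eq_or_lt with ha | ha
    · exact ha.symm.le.trans (mul_nonneg hc lpNorm_nonneg)
    refine le_of_mul_le_mul_right ?_ (Real.rpow_pos_of_pos ha (p - 1))
    rwa [← Real.rpow_one_add' ha.le (by linarith), add_sub_cancel]
  rw [← ofReal_lpNorm hf, ← ofReal_lpNorm hg, ← ENNReal.ofReal_mul hc]
  exact ENNReal.ofReal_le_ofReal hle

end Lp

theorem integral_condExp_mul_of_stronglyMeasurable {Ω : Type*} {m mΩ : MeasurableSpace Ω}
    {μ : Measure Ω} (hm : m ≤ mΩ) [SigmaFinite (μ.trim hm)] {f g : Ω → ℝ}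
    (hg : StronglyMeasurable[m] g) (hfg : Integrable (f * g) μ) (hf : Integrable f μ) :
    ∫ ω, (μ[f | m] * g) ω ∂μ = ∫ ω, f ω * g ω ∂μ :=
  (integral_congr_ae (condExp_mul_of_stronglyMeasurable_right hg hfg hf)).symm.trans
    (integral_condExp hm)

section PredictablePart

variable {Ω : Type*} {mΩ : MeasurableSpace Ω} {μ : Measure Ω} {𝒢 : Filtration ℕ mΩ}
  {V : ℕ → Ω → ℝ}

theorem ae_monotone_predictablePart (hV : ∀ ω, Monotone (V · ω)) :
    ∀ᵐ ω ∂μ, Monotone (predictablePart V 𝒢 μ · ω) := by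
  have hinc : ∀ᵐ ω ∂μ, ∀ k, 0 ≤ μ[V (k + 1) - V k | 𝒢 k] ω := ae_all_iff.2 fun k =>
    condExp_nonneg (.of_forall fun ω => sub_nonneg.2 (hV ω k.le_succ))
  filter_upwards [hinc] with ω hω
  refine monotone_nat_of_le_succ fun k => ?_
  rw [predictablePart_add_one, Pi.add_apply]
  exact le_add_of_nonneg_right (hω k)

theorem ae_nonneg_predictablePart (hV : ∀ ω, Monotone (V · ω)) :
    ∀ᵐ ω ∂μ, ∀ n, 0 ≤ predictablePart V 𝒢 μ n ω := by
  filter_upwards [ae_monotone_predictablePart hV] with ω hω n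
  simpa using hω n.zero_le

theorem memLp_predictablePart {q : ℝ≥0∞} (hq : 1 ≤ q) {n : ℕ} (hV : ∀ k ≤ n, MemLp (V k) q μ) :
    MemLp (predictablePart V 𝒢 μ n) q μ :=
  memLp_finsetSum' _ fun k hk => (((hV (k + 1) (mem_range.1 hk)).sub
    (hV k (mem_range.1 hk).le)).condExp hq)

theorem integral_rpow_predictablePart_le [IsFiniteMeasure μ] {p : ℝ} (hp : 1 ≤ p)
    (hV : ∀ ω, Monotone (V · ω)) {n : ℕ} (hVp : ∀ k ≤ n, MemLp (V k) (.ofReal p) μ) :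
    ∫ ω, predictablePart V 𝒢 μ n ω ^ p ∂μ ≤
      p * ∫ ω, (V n ω - V 0 ω) * predictablePart V 𝒢 μ n ω ^ (p - 1) ∂μ := by
  set A := predictablePart V 𝒢 μ
  have hp' : 1 ≤ ENNReal.ofReal p := by simpa using hp
  have hA : ∀ k ≤ n, MemLp (A k) (.ofReal p) μ := fun k hk =>
    memLp_predictablePart hp' fun j hj => hVp j (hj.trans hk)
  have hA0 := ae_nonneg_predictablePart (μ := μ) (𝒢 := 𝒢) hV
  have hAmono := ae_monotone_predictablePart (μ := μ) (𝒢 := 𝒢) hV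
  have hd : ∀ k ∈ range n, MemLp (V (k + 1) - V k) (.ofReal p) μ := fun k hk =>
    (hVp (k + 1) (mem_range.1 hk)).sub (hVp k (mem_range.1 hk).le)
  have hdA : ∀ k ∈ range n, ∀ j ≤ n,
      Integrable (fun ω => (V (k + 1) - V k) ω * A j ω ^ (p - 1)) μ := fun k hk j hj =>
    (hd k hk).integrable_mul_rpow_sub_one hp (hA j hj) (hA0.mono fun ω h => h j)
  have hcA : ∀ k ∈ range n,
      Integrable (fun ω => μ[V (k + 1) - V k | 𝒢 k] ω * A (k + 1) ω ^ (p - 1)) μ := fun k hk =>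
    ((hd k hk).condExp hp').integrable_mul_rpow_sub_one hp (hA (k + 1) (mem_range.1 hk))
      (hA0.mono fun ω h => h (k + 1))
  calc ∫ ω, A n ω ^ p ∂μ
      ≤ ∫ ω, p * ∑ k ∈ range n, μ[V (k + 1) - V k | 𝒢 k] ω * A (k + 1) ω ^ (p - 1) ∂μ := by
        refine integral_mono_of_nonneg ?_ ((integrable_finsetSum _ hcA).const_mul p) ?_
        · filter_upwards [hA0] with ω hω using Real.rpow_nonneg (hω n) p
        filter_upwards [hA0, hAmono] with ω hω0 hωm
        refine (Real.rpow_le_sum_mul_rpow_sub_one hp hωm (by simp) n).trans_eq ?_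
        refine congrArg _ (sum_congr rfl fun k _ => congrArg (· * _) ?_)
        rw [predictablePart_add_one, Pi.add_apply, add_sub_cancel_left]
    _ = p * ∑ k ∈ range n, ∫ ω, (V (k + 1) - V k) ω * A (k + 1) ω ^ (p - 1) ∂μ := by
        rw [integral_const_mul, integral_finsetSum _ hcA]
        refine congrArg _ (sum_congr rfl fun k hk => ?_)
        refine integral_condExp_mul_of_stronglyMeasurable (𝒢.le k) ?_ (hdA k hk (k + 1)
          (mem_range.1 hk)) ((hd k hk).integrable hp')
        exact (stronglyAdapted_predictablePart k).measurable.pow_const _ |>.stronglyMeasurable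
    _ ≤ p * ∑ k ∈ range n, ∫ ω, (V (k + 1) - V k) ω * A n ω ^ (p - 1) ∂μ := by
        refine mul_le_mul_of_nonneg_left (sum_le_sum fun k hk => ?_) (by linarith)
        refine integral_mono_ae (hdA k hk (k + 1) (mem_range.1 hk)) (hdA k hk n le_rfl) ?_
        filter_upwards [hA0, hAmono] with ω hω0 hωm
        exact mul_le_mul_of_nonneg_left (Real.rpow_le_rpow (hω0 _) (hωm (mem_range.1 hk))
          (by linarith)) (sub_nonneg.2 (hV ω k.le_succ))
    _ = p * ∫ ω, (V n ω - V 0 ω) * A n ω ^ (p - 1) ∂μ := by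
        rw [← integral_finsetSum _ fun k hk => hdA k hk n le_rfl]
        congr 1
        refine integral_congr_ae (.of_forall fun ω => ?_)
        simp only [Pi.sub_apply]
        rw [← sum_mul, sum_range_sub (V · ω)]

end PredictablePart

end MeasureTheory

theorem stmt_9_general {Ω : Type*} {mΩ : MeasurableSpace Ω} {μ : Measure Ω} [IsProbabilityMeasure μ]
    (𝒢 : Filtration ℕ mΩ) (V Vt : ℕ → Ω → ℝ)
    (hmono : ∀ ω, Monotone fun n => V n ω) (h0 : V 0 = 0)
    (hint : ∀ n, Integrable (V n) μ)
    (hVt : ∀ n ω, Vt n ω = ∑ k ∈ Finset.range n,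
      (μ[(fun ω' => V (k + 1) ω' - V k ω') | 𝒢 k]) ω)
    (p : ℝ) (hp : 1 ≤ p) (n : ℕ) :
    eLpNorm (Vt n) (ENNReal.ofReal p) μ ≤ ENNReal.ofReal p * eLpNorm (V n) (ENNReal.ofReal p) μ := by
  have hVt_eq : Vt n = predictablePart V 𝒢 μ n := funext fun ω => by
    rw [hVt, predictablePart, Finset.sum_apply]; rfl
  have hV0 : ∀ k ω, 0 ≤ V k ω := fun k ω => by simpa [h0] using hmono ω k.zero_le
  by_cases hVn : MemLp (V n) (.ofReal p) μ
  · have hVp : ∀ k ≤ n, MemLp (V k) (.ofReal p) μ := fun k hk =>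
      hVn.of_le (hint k).1 (.of_forall fun ω => by
        simpa [abs_of_nonneg (hV0 k ω), abs_of_nonneg (hV0 n ω)] using hmono ω hk)
    rw [hVt_eq]
    refine eLpNorm_le_mul_eLpNorm_of_integral_rpow_le hp (by linarith)
      ((ae_nonneg_predictablePart hmono).mono fun ω h => h n) (.of_forall (hV0 n))
      (memLp_predictablePart (by simpa using hp) hVp) hVn ?_
    simpa [h0] using integral_rpow_predictablePart_le hp hmono hVp
  · have hp0 : ENNReal.ofReal p ≠ 0 := (ENNReal.ofReal_pos.2 (by linarith)).ne'
    simp only [MemLp, (hint n).1, true_and, not_lt, top_le_iff] at hVn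
    rw [hVn, ENNReal.mul_top hp0]
    exact le_top

/-- Discrete-time compensator estimate: if `V` is adapted, nondecreasing, integrable with
`V 0 = 0` and `Ṽ n = ∑_{k<n} E[V (k+1) - V k | 𝒢 k]` is its predictable compensator, then
`‖Ṽ n‖_{L_p} ≤ p ‖V n‖_{L_p}` for every `p ∈ [1, ∞)` and every time `n`. -/
theorem stmt_9 {Ω : Type*} {mΩ : MeasurableSpace Ω} {μ : Measure Ω} [IsProbabilityMeasure μ]
    (𝒢 : Filtration ℕ mΩ) (V Vt : ℕ → Ω → ℝ)
    (hadp : Adapted 𝒢 V) (hmono : ∀ ω, Monotone fun n => V n ω) (h0 : V 0 = 0)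
    (hint : ∀ n, Integrable (V n) μ)
    (hVt : ∀ n ω, Vt n ω = ∑ k ∈ Finset.range n,
      (μ[(fun ω' => V (k + 1) ω' - V k ω') | 𝒢 k]) ω)
    (p : ℝ) (hp : 1 ≤ p) (n : ℕ) :
    eLpNorm (Vt n) (ENNReal.ofReal p) μ ≤ ENNReal.ofReal p * eLpNorm (V n) (ENNReal.ofReal p) μ :=
  stmt_9_general 𝒢 V Vt hmono h0 hint hVt p hp n
end

section
/- Let N be a real discrete-time martingale with N_∞ = ξ ∈ L_q, q > 1, and let V be an adapted nondecreasing process with V₀ = 0 and compensator Ṽ. Then E[ξ Ṽ_∞] = E[∑ₙ N_n (V_{n+1} − V_n)] ≤ E[N*_∞ V_∞], where N*_∞ = sup_n |N_n|. -/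
open MeasureTheory Finset
open scoped ENNReal NNReal

/-! Both `∫ ξ · E[ΔV_k | 𝒢 k]` and `∫ E[ξ | 𝒢 k] · ΔV_k` equal `∫ E[ξ | 𝒢 k] · E[ΔV_k | 𝒢 k]`
by pulling out the `𝒢 k`-measurable factor, so the conditional expectation can be moved from the
increment to `ξ`; summing over `k` gives the identity. The inequality is pathwise: bound `N_k` by
`N*` and telescope the nonnegative increments of `V`. -/

section Duality

variable {Ω : Type*} {m m₀ : MeasurableSpace Ω} {μ : Measure Ω}

theorem integral_mul_condExp_eq_integral_condExp_mul_condExp (hm : m ≤ m₀)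
    [SigmaFinite (μ.trim hm)] {f g : Ω → ℝ} (hf : Integrable f μ)
    (hfg : Integrable (fun ω => f ω * μ[g | m] ω) μ) :
    ∫ ω, f ω * μ[g | m] ω ∂μ = ∫ ω, μ[f | m] ω * μ[g | m] ω ∂μ :=
  calc ∫ ω, f ω * μ[g | m] ω ∂μ = ∫ ω, μ[f * μ[g | m] | m] ω ∂μ := (integral_condExp hm).symm
    _ = ∫ ω, μ[f | m] ω * μ[g | m] ω ∂μ :=
      integral_congr_ae (condExp_mul_of_stronglyMeasurable_right stronglyMeasurable_condExp hfg hf)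

theorem integral_mul_condExp_comm (hm : m ≤ m₀) [SigmaFinite (μ.trim hm)] {f g : Ω → ℝ}
    (hf : Integrable f μ) (hg : Integrable g μ)
    (hfg : Integrable (fun ω => f ω * μ[g | m] ω) μ)
    (hgf : Integrable (fun ω => μ[f | m] ω * g ω) μ) :
    ∫ ω, f ω * μ[g | m] ω ∂μ = ∫ ω, μ[f | m] ω * g ω ∂μ := by
  simp_rw [mul_comm (μ[f | m] _) (g _)] at hgf ⊢
  rw [integral_mul_condExp_eq_integral_condExp_mul_condExp hm hf hfg,
    integral_mul_condExp_eq_integral_condExp_mul_condExp hm hg hgf]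
  simp_rw [mul_comm]

end Duality

theorem integrable_mul_of_integrable_mul_sum_of_nonneg {Ω ι : Type*} {mΩ : MeasurableSpace Ω}
    {μ : Measure Ω} {s : Finset ι} {f : Ω → ℝ} {g : ι → Ω → ℝ}
    (hf : AEStronglyMeasurable f μ) (hg : ∀ i ∈ s, AEStronglyMeasurable (g i) μ)
    (hg_nonneg : ∀ i ∈ s, 0 ≤ᵐ[μ] g i)
    (hfg : Integrable (fun ω => f ω * ∑ i ∈ s, g i ω) μ) {i : ι} (hi : i ∈ s) :
    Integrable (fun ω => f ω * g i ω) μ := by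
  refine hfg.mono (hf.mul (hg i hi)) ?_
  filter_upwards [(Filter.eventually_all_finset s).2 hg_nonneg] with ω hω
  simp only [norm_mul, Real.norm_eq_abs, abs_of_nonneg (hω i hi),
    abs_of_nonneg (sum_nonneg hω)]
  exact mul_le_mul_of_nonneg_left (single_le_sum hω hi) (abs_nonneg _)

theorem sum_mul_sub_le_mul_sub {a v : ℕ → ℝ} (hv : Monotone v) {n : ℕ} {M : ℝ}
    (ha : ∀ k < n, a k ≤ M) :
    ∑ k ∈ range n, a k * (v (k + 1) - v k) ≤ M * (v n - v 0) :=
  calc ∑ k ∈ range n, a k * (v (k + 1) - v k)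
      ≤ ∑ k ∈ range n, M * (v (k + 1) - v k) :=
        sum_le_sum fun k hk => mul_le_mul_of_nonneg_right (ha k (mem_range.1 hk))
          (sub_nonneg.2 (hv k.le_succ))
    _ = M * (v n - v 0) := by rw [← mul_sum, sum_range_sub]

/-- Discrete-time duality identity used in the compensator `L_p` estimate: with
`N k = E[ξ | 𝒢 k]`, `V` adapted nondecreasing with `V 0 = 0` and compensator
`Ṽ n = ∑_{k<n} E[V (k+1) - V k | 𝒢 k]`, one has
`E[ξ Ṽ_n] = E[∑_{k<n} N_k (V_{k+1} - V_k)] ≤ E[N*_n V_n]` where `N*_n = max_{k ≤ n} |N_k|`. -/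
theorem stmt_10 {Ω : Type*} {mΩ : MeasurableSpace Ω} {μ : Measure Ω} [IsProbabilityMeasure μ]
    (𝒢 : Filtration ℕ mΩ) (ξ : Ω → ℝ) (q : ℝ) (hq : 1 < q)
    (hξ : MemLp ξ (ENNReal.ofReal q) μ)
    (N : ℕ → Ω → ℝ) (hN : ∀ k, N k = μ[ξ | 𝒢 k])
    (V Vt : ℕ → Ω → ℝ) (hmono : ∀ ω, Monotone fun n => V n ω)
    (h0 : V 0 = 0) (hVint : ∀ n, Integrable (V n) μ)
    (hVt : ∀ n ω, Vt n ω = ∑ k ∈ Finset.range n,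
      (μ[(fun ω' => V (k + 1) ω' - V k ω') | 𝒢 k]) ω)
    (n : ℕ)
    (hint1 : Integrable (fun ω => ξ ω * Vt n ω) μ)
    (hint2 : ∀ k, Integrable (fun ω => N k ω * (V (k + 1) ω - V k ω)) μ)
    (hint3 : Integrable
      (fun ω => ((Finset.range (n + 1)).sup' (by simp) fun k => |N k ω|) * V n ω) μ) :
    (∫ ω, ξ ω * Vt n ω ∂μ =
      ∫ ω, ∑ k ∈ Finset.range n, N k ω * (V (k + 1) ω - V k ω) ∂μ) ∧
    (∫ ω, ∑ k ∈ Finset.range n, N k ω * (V (k + 1) ω - V k ω) ∂μ ≤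
      ∫ ω, ((Finset.range (n + 1)).sup' (by simp) fun k => |N k ω|) * V n ω ∂μ) := by
  have hξint : Integrable ξ μ :=
    hξ.integrable (by simpa using ENNReal.ofReal_le_ofReal hq.le)
  set Y : ℕ → Ω → ℝ := fun k ω => V (k + 1) ω - V k ω
  have hint_sum : Integrable (fun ω => ξ ω * ∑ k ∈ range n, μ[Y k | 𝒢 k] ω) μ := by
    simpa only [hVt n] using hint1
  have hcomp_nonneg : ∀ k ∈ range n, 0 ≤ᵐ[μ] μ[Y k | 𝒢 k] := fun k _ =>
    condExp_nonneg (ae_of_all _ fun ω => sub_nonneg.2 (hmono ω k.le_succ))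
  have hint_comp : ∀ k ∈ range n, Integrable (fun ω => ξ ω * μ[Y k | 𝒢 k] ω) μ :=
    fun _ hk => integrable_mul_of_integrable_mul_sum_of_nonneg hξint.aestronglyMeasurable
      (fun _ _ => integrable_condExp.aestronglyMeasurable) hcomp_nonneg hint_sum hk
  have hdual : ∀ k ∈ range n, ∫ ω, ξ ω * μ[Y k | 𝒢 k] ω ∂μ = ∫ ω, N k ω * Y k ω ∂μ :=
    fun k hk => by
      rw [hN k]
      exact integral_mul_condExp_comm (𝒢.le k) hξint ((hVint _).sub (hVint k)) (hint_comp k hk)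
        (hN k ▸ hint2 k)
  refine ⟨?_, integral_mono (integrable_finsetSum _ fun k _ => hint2 k) hint3 fun ω => ?_⟩
  · simp_rw [hVt n, mul_sum]
    rw [integral_finsetSum _ hint_comp, integral_finsetSum _ fun k _ => hint2 k]
    exact sum_congr rfl hdual
  · have hN_le : ∀ k < n, N k ω ≤ (range (n + 1)).sup' (by simp) fun k => |N k ω| :=
      fun k hk => (le_abs_self _).trans (le_sup' (fun k => |N k ω|) (mem_range.2 (by omega)))
    simpa [h0] using sum_mul_sub_le_mul_sub (hmono ω) hN_le
end

section
/- Let M be an H-valued martingale and assume the upper BDG bound ‖M*_∞‖_{L_p} ≤ C_p ‖[M,M]_∞^{1/2}‖_{L_p} holds for some p ≥ 1 for all H-valued martingales. Then ‖[M,M]_∞^{1/2}‖_{L_{2p}} ≲_p ‖M*_∞‖_{L_{2p}}. -/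
/-!
Integration by parts gives `‖M_n‖² = [M,M]_n + 2 (M₋ · M)_n`, hence `[M,M]_n ≤ (M*_n)² + 2 N*_n`
for the martingale `N = (M₋ · M) e`, the real transform `M₋ · M` carried by a unit vector `e`.
The upper bound applied to `N`, then `[N,N] ≤ (M*)² [M,M]` and Cauchy–Schwarz, give
`x² ≤ y² + 2C y x` for `x = ‖[M,M]_n^{1/2}‖_{2p}` and `y = ‖M*_n‖_{2p}`, so `x ≤ (1 + 2C) y`.
To make `N` a martingale, `M` is first stopped at `n`; then its values lie in `L^{2p} ⊆ L²`
as soon as `y < ∞`, and `x < ∞` because `[M,M]_n ≤ 4n (M*_n)²`.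
-/

open MeasureTheory Finset
open scoped ENNReal NNReal RealInnerProductSpace

section Pathwise

variable {E : Type*} [SeminormedAddCommGroup E]

noncomputable def quadVar (x : ℕ → E) (n : ℕ) : ℝ≥0∞ :=
  ∑ k ∈ range n, (‖x (k + 1) - x k‖₊ : ℝ≥0∞) ^ 2

noncomputable def maxNorm (x : ℕ → E) (n : ℕ) : ℝ≥0∞ :=
  ⨆ k ∈ range (n + 1), (‖x k‖₊ : ℝ≥0∞)

lemma nnnorm_le_maxNorm (x : ℕ → E) {k n : ℕ} (hk : k ≤ n) :
    (‖x k‖₊ : ℝ≥0∞) ≤ maxNorm x n :=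
  le_iSup₂ (f := fun j (_ : j ∈ range (n + 1)) => (‖x j‖₊ : ℝ≥0∞)) k
    (mem_range.2 (Nat.lt_succ_of_le hk))

lemma quadVar_le_four_mul_maxNorm_sq (x : ℕ → E) (n : ℕ) :
    quadVar x n ≤ 4 * n * maxNorm x n ^ 2 := by
  have hterm : ∀ k ∈ range n, (‖x (k + 1) - x k‖₊ : ℝ≥0∞) ^ 2 ≤ (2 * maxNorm x n) ^ 2 := by
    intro k hk
    have hk := mem_range.1 hk
    gcongr
    calc (‖x (k + 1) - x k‖₊ : ℝ≥0∞) ≤ ‖x (k + 1)‖₊ + ‖x k‖₊ := by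
          exact_mod_cast nnnorm_sub_le _ _
      _ ≤ maxNorm x n + maxNorm x n :=
          add_le_add (nnnorm_le_maxNorm x hk) (nnnorm_le_maxNorm x hk.le)
      _ = 2 * maxNorm x n := (two_mul _).symm
  calc quadVar x n ≤ ∑ _k ∈ range n, (2 * maxNorm x n) ^ 2 := sum_le_sum hterm
    _ = 4 * n * maxNorm x n ^ 2 := by
      rw [sum_const, card_range, nsmul_eq_mul]
      ring

lemma quadVar_comp_min (x : ℕ → E) (n : ℕ) : quadVar (fun k => x (min k n)) n = quadVar x n :=
  sum_congr rfl fun k hk => by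
    have hk := mem_range.1 hk
    simp only [min_eq_left hk.le, min_eq_left (Nat.succ_le_of_lt hk)]

lemma maxNorm_comp_min (x : ℕ → E) (n : ℕ) : maxNorm (fun k => x (min k n)) n = maxNorm x n :=
  iSup_congr fun k => iSup_congr fun hk => by
    simp only [min_eq_left (Nat.lt_succ_iff.1 (mem_range.1 hk))]

end Pathwise

section InnerTransform

variable {H : Type*} [NormedAddCommGroup H] [InnerProductSpace ℝ H]

def innerTransform (x : ℕ → H) (e : H) (n : ℕ) : H :=
  (∑ k ∈ range n, ⟪x k, x (k + 1) - x k⟫) • e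

lemma innerTransform_succ_sub (x : ℕ → H) (e : H) (k : ℕ) :
    innerTransform x e (k + 1) - innerTransform x e k = ⟪x k, x (k + 1) - x k⟫ • e := by
  rw [innerTransform, innerTransform, sum_range_succ, add_smul, add_sub_cancel_left]

lemma norm_sq_eq_sum_norm_sub_sq_add_two_mul_sum_inner {x : ℕ → H} (hx0 : x 0 = 0) (n : ℕ) :
    ‖x n‖ ^ 2 =
      ∑ k ∈ range n, ‖x (k + 1) - x k‖ ^ 2 + 2 * ∑ k ∈ range n, ⟪x k, x (k + 1) - x k⟫ := by
  induction n with
  | zero => simp [hx0]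
  | succ n ih =>
    rw [sum_range_succ, sum_range_succ, ← add_sub_cancel (x n) (x (n + 1)), norm_add_sq_real, ih]
    simp only [add_sub_cancel]
    ring

lemma quadVar_le_maxNorm_sq_add_two_mul_maxNorm_innerTransform {x : ℕ → H} (hx0 : x 0 = 0)
    {e : H} (he : ‖e‖ = 1) (n : ℕ) :
    quadVar x n ≤ maxNorm x n ^ 2 + 2 * maxNorm (innerTransform x e) n := by
  set D := ∑ k ∈ range n, ⟪x k, x (k + 1) - x k⟫
  have hD : ‖innerTransform x e n‖₊ = ‖D‖₊ := by
    rw [innerTransform, nnnorm_smul, show ‖e‖₊ = 1 from NNReal.coe_eq_one.1 he, mul_one]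
  have hreal : ∑ k ∈ range n, ‖x (k + 1) - x k‖ ^ 2 ≤ ‖x n‖ ^ 2 + 2 * ‖D‖ := by
    rw [norm_sq_eq_sum_norm_sub_sq_add_two_mul_sum_inner hx0 n, Real.norm_eq_abs]
    linarith [neg_abs_le D]
  calc quadVar x n = ENNReal.ofReal (∑ k ∈ range n, ‖x (k + 1) - x k‖ ^ 2) := by
        rw [ENNReal.ofReal_sum_of_nonneg fun k _ => by positivity]
        refine sum_congr rfl fun k _ => ?_
        rw [ENNReal.ofReal_pow (norm_nonneg _), ofReal_norm, enorm_eq_nnnorm]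
    _ ≤ ENNReal.ofReal (‖x n‖ ^ 2 + 2 * ‖D‖) := ENNReal.ofReal_le_ofReal hreal
    _ = (‖x n‖₊ : ℝ≥0∞) ^ 2 + 2 * ‖innerTransform x e n‖₊ := by
        rw [ENNReal.ofReal_add (by positivity) (by positivity), ENNReal.ofReal_pow (norm_nonneg _),
          ENNReal.ofReal_mul zero_le_two, ofReal_norm, ofReal_norm, hD, enorm_eq_nnnorm,
          enorm_eq_nnnorm, ENNReal.ofReal_ofNat]
    _ ≤ maxNorm x n ^ 2 + 2 * maxNorm (innerTransform x e) n := by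
        gcongr
        · exact nnnorm_le_maxNorm x le_rfl
        · exact nnnorm_le_maxNorm _ le_rfl

lemma quadVar_innerTransform_le (x : ℕ → H) {e : H} (he : ‖e‖ ≤ 1) (n : ℕ) :
    quadVar (innerTransform x e) n ≤ maxNorm x n ^ 2 * quadVar x n := by
  rw [quadVar, quadVar, mul_sum]
  refine sum_le_sum fun k hk => ?_
  rw [innerTransform_succ_sub, ← mul_pow]
  gcongr
  calc (‖⟪x k, x (k + 1) - x k⟫ • e‖₊ : ℝ≥0∞)
      ≤ ‖x k‖₊ * ‖x (k + 1) - x k‖₊ := by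
        rw [nnnorm_smul]
        have he' : ‖e‖₊ ≤ 1 := he
        exact_mod_cast (mul_le_of_le_one_right zero_le he').trans (nnnorm_inner_le_nnnorm _ _)
    _ ≤ maxNorm x n * ‖x (k + 1) - x k‖₊ := by
        gcongr
        exact nnnorm_le_maxNorm x (mem_range.1 hk).le

end InnerTransform

section Martingale

variable {Ω : Type*} {mΩ : MeasurableSpace Ω} {μ : Measure Ω} {𝒢 : Filtration ℕ mΩ}
  {H : Type*} [NormedAddCommGroup H] [InnerProductSpace ℝ H]

lemma MeasureTheory.MemLp.integrable_inner {X Y : Ω → H} (hX : MemLp X 2 μ) (hY : MemLp Y 2 μ) :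
    Integrable (fun ω => ⟪X ω, Y ω⟫) μ :=
  (L2.integrable_inner (𝕜 := ℝ) (hX.toLp X) (hY.toLp Y)).congr <| by
    filter_upwards [hX.coeFn_toLp, hY.coeFn_toLp] with ω h1 h2
    rw [h1, h2]

variable [CompleteSpace H]

lemma condExp_inner_eq_zero {m : MeasurableSpace Ω} {X Y : Ω → H} (hX : StronglyMeasurable[m] X)
    (hXY : Integrable (fun ω => ⟪X ω, Y ω⟫) μ) (hY : Integrable Y μ) (hY0 : μ[Y|m] =ᵐ[μ] 0) :
    μ[fun ω => ⟪X ω, Y ω⟫|m] =ᵐ[μ] 0 := by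
  filter_upwards [condExp_bilin_of_stronglyMeasurable_left (innerSL ℝ) hX hXY hY, hY0]
    with ω h1 h2
  refine h1.trans ?_
  rw [h2, Pi.zero_apply, Pi.zero_apply, map_zero]

variable [IsFiniteMeasure μ]

lemma MeasureTheory.Martingale.condExp_succ_sub_eq_zero {E : Type*} [NormedAddCommGroup E]
    [NormedSpace ℝ E] [CompleteSpace E] {M : ℕ → Ω → E} (hM : Martingale M 𝒢 μ) (k : ℕ) :
    μ[M (k + 1) - M k|𝒢 k] =ᵐ[μ] 0 := by
  filter_upwards [condExp_sub (m := 𝒢 k) (hM.integrable (k + 1)) (hM.integrable k),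
    hM.condExp_ae_eq k.le_succ] with ω h1 h2
  rw [h1, Pi.sub_apply, h2, condExp_of_stronglyMeasurable (𝒢.le k) (hM.stronglyMeasurable k)
    (hM.integrable k), sub_self, Pi.zero_apply]

lemma MeasureTheory.Martingale.comp_min {E : Type*} [NormedAddCommGroup E] [NormedSpace ℝ E]
    [CompleteSpace E] {M : ℕ → Ω → E} (hM : Martingale M 𝒢 μ) (n : ℕ) :
    Martingale (fun k => M (min k n)) 𝒢 μ := by
  refine martingale_of_condExp_sub_eq_zero_nat
    (fun k => (hM.stronglyMeasurable _).mono (𝒢.mono (min_le_left k n)))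
    (fun k => hM.integrable _) fun k => ?_
  rcases lt_or_ge k n with hk | hk
  · simpa only [min_eq_left hk.le, min_eq_left (Nat.succ_le_of_lt hk)]
      using hM.condExp_succ_sub_eq_zero k
  · simp only [min_eq_right hk, min_eq_right (hk.trans k.le_succ), sub_self, condExp_zero]
    rfl

lemma martingale_innerTransform {M : ℕ → Ω → H} (hM : Martingale M 𝒢 μ)
    (hL2 : ∀ k, MemLp (M k) 2 μ) (e : H) :
    Martingale (fun n ω => innerTransform (fun k => M k ω) e n) 𝒢 μ := by
  set d : ℕ → Ω → ℝ := fun k ω => ⟪M k ω, M (k + 1) ω - M k ω⟫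
  have hd_int : ∀ k, Integrable (d k) μ := fun k =>
    (hL2 k).integrable_inner ((hL2 (k + 1)).sub (hL2 k))
  have hd_meas : ∀ k, StronglyMeasurable[𝒢 (k + 1)] (d k) := fun k =>
    continuous_inner.comp_stronglyMeasurable
      (((hM.stronglyMeasurable k).mono (𝒢.mono k.le_succ)).prodMk
        ((hM.stronglyMeasurable (k + 1)).sub ((hM.stronglyMeasurable k).mono (𝒢.mono k.le_succ))))
  have hd_condExp : ∀ k, μ[d k|𝒢 k] =ᵐ[μ] 0 := fun k =>
    condExp_inner_eq_zero (Y := M (k + 1) - M k) (hM.stronglyMeasurable k) (hd_int k)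
      ((hM.integrable (k + 1)).sub (hM.integrable k)) (hM.condExp_succ_sub_eq_zero k)
  set T := ContinuousLinearMap.toSpanSingleton ℝ e
  have hincr : ∀ k, (fun ω => innerTransform (fun k => M k ω) e (k + 1)) -
      (fun ω => innerTransform (fun k => M k ω) e k) = T ∘ d k := fun k => by
    ext ω
    simp [innerTransform_succ_sub, T, d]
  refine martingale_of_condExp_sub_eq_zero_nat (fun n => ?_) (fun n => ?_) fun k => ?_
  · exact (Finset.stronglyMeasurable_fun_sum _ fun k hk =>
      (hd_meas k).mono (𝒢.mono (Nat.succ_le_of_lt (mem_range.1 hk)))).smul_const e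
  · exact (integrable_finsetSum _ fun k _ => hd_int k).smul_const e
  · rw [hincr]
    filter_upwards [(T.comp_condExp_comm (m := 𝒢 k) (hd_int k)).symm, hd_condExp k] with ω h1 h2
    simp [h1, h2]

end Martingale

section LpInequalities

variable {Ω : Type*} [MeasurableSpace Ω] {μ : Measure Ω} {p : ℝ} {Q S T R : Ω → ℝ≥0∞}

lemma ENNReal.sq_rpow (a : ℝ≥0∞) (q : ℝ) : (a ^ 2) ^ q = a ^ (2 * q) := by
  rw [← ENNReal.rpow_natCast, ← ENNReal.rpow_mul, Nat.cast_ofNat]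

lemma ENNReal.rpow_one_div_two_mul_sq (a : ℝ≥0∞) (hp : p ≠ 0) :
    (a ^ (1 / (2 * p))) ^ 2 = a ^ (1 / p) := by
  rw [← ENNReal.rpow_natCast, ← ENNReal.rpow_mul]
  congr 1
  field_simp
  norm_num

lemma lintegral_rpow_one_div_le_of_le_sq_add (hp : 1 ≤ p) (hS : AEMeasurable S μ)
    (hT : AEMeasurable T μ) (hQST : ∀ ω, Q ω ≤ S ω ^ 2 + 2 * T ω) :
    (∫⁻ ω, Q ω ^ p ∂μ) ^ (1 / p) ≤
      ((∫⁻ ω, S ω ^ (2 * p) ∂μ) ^ (1 / (2 * p))) ^ 2 + 2 * (∫⁻ ω, T ω ^ p ∂μ) ^ (1 / p) := by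
  have hp0 : 0 < p := zero_lt_one.trans_le hp
  calc (∫⁻ ω, Q ω ^ p ∂μ) ^ (1 / p)
      ≤ (∫⁻ ω, (S ω ^ 2 + 2 * T ω) ^ p ∂μ) ^ (1 / p) := by
        gcongr with ω
        exact hQST ω
    _ ≤ (∫⁻ ω, (S ω ^ 2) ^ p ∂μ) ^ (1 / p) + (∫⁻ ω, (2 * T ω) ^ p ∂μ) ^ (1 / p) :=
        ENNReal.lintegral_Lp_add_le (hS.pow_const 2) (hT.const_mul 2) hp
    _ = _ := by
        simp_rw [ENNReal.sq_rpow, ENNReal.rpow_one_div_two_mul_sq _ hp0.ne',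
          ENNReal.mul_rpow_of_nonneg _ _ hp0.le]
        rw [lintegral_const_mul' _ _ (by simp), ENNReal.mul_rpow_of_nonneg _ _ (by positivity),
          ← ENNReal.rpow_mul, mul_one_div_cancel hp0.ne', ENNReal.rpow_one]

lemma lintegral_rpow_half_le_of_le_sq_mul (hp : 0 ≤ p) (hQ : AEMeasurable Q μ)
    (hS : AEMeasurable S μ) (hRSQ : ∀ ω, R ω ≤ S ω ^ 2 * Q ω) :
    (∫⁻ ω, R ω ^ (p / 2) ∂μ) ^ (1 / p) ≤
      (∫⁻ ω, S ω ^ (2 * p) ∂μ) ^ (1 / (2 * p)) * (∫⁻ ω, Q ω ^ p ∂μ) ^ (1 / (2 * p)) := by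
  have cauchy_schwarz : ∫⁻ ω, R ω ^ (p / 2) ∂μ ≤
      (∫⁻ ω, S ω ^ (2 * p) ∂μ) ^ (1 / 2 : ℝ) * (∫⁻ ω, Q ω ^ p ∂μ) ^ (1 / 2 : ℝ) :=
    calc ∫⁻ ω, R ω ^ (p / 2) ∂μ ≤ ∫⁻ ω, S ω ^ p * Q ω ^ (p / 2) ∂μ := by
          refine lintegral_mono fun ω => ?_
          calc R ω ^ (p / 2) ≤ (S ω ^ 2 * Q ω) ^ (p / 2) := by gcongr; exact hRSQ ω
            _ = S ω ^ p * Q ω ^ (p / 2) := by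
              rw [ENNReal.mul_rpow_of_nonneg _ _ (by positivity), ENNReal.sq_rpow,
                mul_div_cancel₀ _ two_ne_zero]
      _ ≤ (∫⁻ ω, (S ω ^ p) ^ (2 : ℝ) ∂μ) ^ (1 / 2 : ℝ) *
            (∫⁻ ω, (Q ω ^ (p / 2)) ^ (2 : ℝ) ∂μ) ^ (1 / 2 : ℝ) :=
          ENNReal.lintegral_mul_le_Lp_mul_Lq μ Real.HolderConjugate.two_two
            (hS.pow_const p) (hQ.pow_const (p / 2))
      _ = _ := by simp_rw [← ENNReal.rpow_mul, mul_comm p 2, div_mul_cancel₀ p two_ne_zero]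
  calc (∫⁻ ω, R ω ^ (p / 2) ∂μ) ^ (1 / p)
      ≤ ((∫⁻ ω, S ω ^ (2 * p) ∂μ) ^ (1 / 2 : ℝ) * (∫⁻ ω, Q ω ^ p ∂μ) ^ (1 / 2 : ℝ)) ^ (1 / p) := by
        gcongr
    _ = _ := by
        rw [ENNReal.mul_rpow_of_nonneg _ _ (by positivity), ← ENNReal.rpow_mul,
          ← ENNReal.rpow_mul, one_div_mul_one_div]

lemma ENNReal.le_one_add_two_mul_of_sq_le {x y c : ℝ≥0∞} (hx : x ≠ ∞) (hc : c ≠ ∞)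
    (h : x ^ 2 ≤ y ^ 2 + 2 * c * y * x) : x ≤ (1 + 2 * c) * y := by
  rcases eq_or_ne y ∞ with rfl | hy
  · simp
  lift x to ℝ≥0 using hx
  lift y to ℝ≥0 using hy
  lift c to ℝ≥0 using hc
  norm_cast at h ⊢
  rw [← NNReal.coe_le_coe] at h ⊢
  push_cast at h ⊢
  by_contra! hlt
  have hxy : 0 < (x : ℝ) + y := by nlinarith [x.2, y.2, c.2]
  -- `x² - 2cyx - y² = (x - (1 + 2c) y) (x + y) + 2c y²`
  nlinarith [_root_.mul_pos (sub_pos.2 hlt) hxy, mul_nonneg c.2 (sq_nonneg (y : ℝ))]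

lemma lintegral_rpow_one_div_two_mul_le_of_le_sq_add (hp : 1 ≤ p) {C : ℝ≥0∞} (hC : C ≠ ∞)
    (hQ : AEMeasurable Q μ) (hS : AEMeasurable S μ) (hT : AEMeasurable T μ)
    (hQST : ∀ ω, Q ω ≤ S ω ^ 2 + 2 * T ω) (hRSQ : ∀ ω, R ω ≤ S ω ^ 2 * Q ω)
    (hTR : (∫⁻ ω, T ω ^ p ∂μ) ^ (1 / p) ≤ C * (∫⁻ ω, R ω ^ (p / 2) ∂μ) ^ (1 / p))
    (hQ_fin : ∫⁻ ω, Q ω ^ p ∂μ ≠ ∞) :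
    (∫⁻ ω, Q ω ^ p ∂μ) ^ (1 / (2 * p)) ≤
      (1 + 2 * C) * (∫⁻ ω, S ω ^ (2 * p) ∂μ) ^ (1 / (2 * p)) := by
  have hp0 : 0 < p := zero_lt_one.trans_le hp
  set x := (∫⁻ ω, Q ω ^ p ∂μ) ^ (1 / (2 * p))
  set y := (∫⁻ ω, S ω ^ (2 * p) ∂μ) ^ (1 / (2 * p))
  refine ENNReal.le_one_add_two_mul_of_sq_le
    (ENNReal.rpow_ne_top_of_nonneg (by positivity) hQ_fin) hC ?_
  calc x ^ 2 = (∫⁻ ω, Q ω ^ p ∂μ) ^ (1 / p) := ENNReal.rpow_one_div_two_mul_sq _ hp0.ne'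
    _ ≤ y ^ 2 + 2 * (∫⁻ ω, T ω ^ p ∂μ) ^ (1 / p) :=
        lintegral_rpow_one_div_le_of_le_sq_add hp hS hT hQST
    _ ≤ y ^ 2 + 2 * (C * (y * x)) := by
        gcongr
        exact hTR.trans (by gcongr; exact lintegral_rpow_half_le_of_le_sq_mul hp0.le hQ hS hRSQ)
    _ = y ^ 2 + 2 * C * y * x := by ring

end LpInequalities

section Integrability

variable {Ω : Type*} {mΩ : MeasurableSpace Ω} {μ : Measure Ω}
  {E : Type*} [SeminormedAddCommGroup E] {X : ℕ → Ω → E}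

lemma measurable_quadVar (hX : ∀ k, StronglyMeasurable (X k)) (n : ℕ) :
    Measurable fun ω => quadVar (fun k => X k ω) n :=
  Finset.measurable_sum _ fun k _ =>
    (((hX (k + 1)).sub (hX k)).nnnorm.measurable.coe_nnreal_ennreal).pow_const 2

lemma measurable_maxNorm (hX : ∀ k, StronglyMeasurable (X k)) (n : ℕ) :
    Measurable fun ω => maxNorm (fun k => X k ω) n :=
  Measurable.iSup fun k => Measurable.iSup fun _ => (hX k).nnnorm.measurable.coe_nnreal_ennreal

lemma memLp_of_lintegral_maxNorm_rpow_ne_top (hX : ∀ k, AEStronglyMeasurable (X k) μ) {q : ℝ}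
    (hq : 0 < q) {k n : ℕ} (hk : k ≤ n) (h : ∫⁻ ω, maxNorm (fun j => X j ω) n ^ q ∂μ ≠ ∞) :
    MemLp (X k) (ENNReal.ofReal q) μ := by
  refine ⟨hX k, ?_⟩
  rw [eLpNorm_lt_top_iff_lintegral_rpow_enorm_lt_top (by simpa using hq) ENNReal.ofReal_ne_top,
    ENNReal.toReal_ofReal hq.le]
  calc ∫⁻ ω, ‖X k ω‖ₑ ^ q ∂μ ≤ ∫⁻ ω, maxNorm (fun j => X j ω) n ^ q ∂μ := by
        gcongr with ω
        rw [enorm_eq_nnnorm]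
        exact nnnorm_le_maxNorm _ hk
    _ < ∞ := h.lt_top

lemma lintegral_quadVar_rpow_ne_top {p : ℝ} (hp : 0 ≤ p) (n : ℕ)
    (h : ∫⁻ ω, maxNorm (fun k => X k ω) n ^ (2 * p) ∂μ ≠ ∞) :
    ∫⁻ ω, quadVar (fun k => X k ω) n ^ p ∂μ ≠ ∞ := by
  have h4n : (4 * n : ℝ≥0∞) ^ p ≠ ∞ := ENNReal.rpow_ne_top_of_nonneg hp (by finiteness)
  refine ne_top_of_le_ne_top
    (b := ∫⁻ ω, (4 * n : ℝ≥0∞) ^ p * maxNorm (fun k => X k ω) n ^ (2 * p) ∂μ) ?_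
    (lintegral_mono fun ω => ?_)
  · rw [lintegral_const_mul' _ _ h4n]
    exact ENNReal.mul_ne_top h4n h
  · calc quadVar (fun k => X k ω) n ^ p ≤ (4 * n * maxNorm (fun k => X k ω) n ^ 2) ^ p := by
          gcongr
          exact quadVar_le_four_mul_maxNorm_sq _ n
      _ = (4 * n : ℝ≥0∞) ^ p * maxNorm (fun k => X k ω) n ^ (2 * p) := by
          rw [ENNReal.mul_rpow_of_nonneg _ _ hp, ← ENNReal.rpow_natCast, ← ENNReal.rpow_mul,
            Nat.cast_ofNat]

end Integrability

theorem stmt_15_general {Ω H : Type*} {mΩ : MeasurableSpace Ω} {μ : Measure Ω} [IsProbabilityMeasure μ]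
    [NormedAddCommGroup H] [InnerProductSpace ℝ H] [CompleteSpace H]
    (𝒢 : Filtration ℕ mΩ) (p : ℝ) (hp : 1 ≤ p) (C : ℝ≥0∞) (hC : C ≠ ∞)
    (hupper : ∀ N : ℕ → Ω → H, Martingale N 𝒢 μ → N 0 = 0 → ∀ n : ℕ,
      (∫⁻ ω, (⨆ k ∈ Finset.range (n + 1), (‖N k ω‖₊ : ℝ≥0∞)) ^ p ∂μ) ^ (1 / p) ≤
        C * (∫⁻ ω, (∑ k ∈ Finset.range n,
          (‖N (k + 1) ω - N k ω‖₊ : ℝ≥0∞) ^ 2) ^ (p / 2) ∂μ) ^ (1 / p))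
    (M : ℕ → Ω → H) (hM : Martingale M 𝒢 μ) (h0 : M 0 = 0) :
    ∃ C' : ℝ≥0∞, C' ≠ ∞ ∧ ∀ n : ℕ,
      (∫⁻ ω, (∑ k ∈ Finset.range n,
          (‖M (k + 1) ω - M k ω‖₊ : ℝ≥0∞) ^ 2) ^ p ∂μ) ^ (1 / (2 * p)) ≤
        C' * (∫⁻ ω, (⨆ k ∈ Finset.range (n + 1),
          (‖M k ω‖₊ : ℝ≥0∞)) ^ (2 * p) ∂μ) ^ (1 / (2 * p)) := by
  have hp0 : 0 < p := zero_lt_one.trans_le hp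
  refine ⟨1 + 2 * C, by finiteness, fun n => ?_⟩
  show (∫⁻ ω, quadVar (fun k => M k ω) n ^ p ∂μ) ^ (1 / (2 * p)) ≤
    (1 + 2 * C) * (∫⁻ ω, maxNorm (fun k => M k ω) n ^ (2 * p) ∂μ) ^ (1 / (2 * p))
  rcases subsingleton_or_nontrivial H with hH | hH
  · simp [quadVar, Subsingleton.elim _ (0 : H), ENNReal.zero_rpow_of_pos, hp0]
  obtain ⟨e, he⟩ := exists_norm_eq H zero_le_one
  by_cases hY : ∫⁻ ω, maxNorm (fun k => M k ω) n ^ (2 * p) ∂μ = ∞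
  · simp [hY, ENNReal.top_rpow_of_pos, hp0]
  have hM_meas : ∀ k, StronglyMeasurable (M k) := fun k => (hM.stronglyMeasurable k).mono (𝒢.le k)
  have hN := martingale_innerTransform (hM.comp_min n) (fun k =>
    (memLp_of_lintegral_maxNorm_rpow_ne_top (fun j => (hM_meas j).aestronglyMeasurable)
      (by positivity) (min_le_right k n) hY).mono_exponent
      (by rw [← ENNReal.ofReal_ofNat 2]; exact ENNReal.ofReal_le_ofReal (by linarith))) e
  refine lintegral_rpow_one_div_two_mul_le_of_le_sq_add hp hC
    (measurable_quadVar hM_meas n).aemeasurable (measurable_maxNorm hM_meas n).aemeasurable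
    (measurable_maxNorm (fun k => (hN.stronglyMeasurable k).mono (𝒢.le k)) n).aemeasurable
    (fun ω => ?_) (fun ω => ?_) (hupper _ hN (funext fun ω => by simp [innerTransform]) n)
    (lintegral_quadVar_rpow_ne_top hp0.le n hY)
  · rw [← quadVar_comp_min (fun k => M k ω), ← maxNorm_comp_min (fun k => M k ω)]
    exact quadVar_le_maxNorm_sq_add_two_mul_maxNorm_innerTransform (by simp [h0]) he n
  · rw [← quadVar_comp_min (fun k => M k ω), ← maxNorm_comp_min (fun k => M k ω)]
    exact quadVar_innerTransform_le _ he.le n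

/-- Discrete-time "lower bounds by upper bounds": if the BDG upper bound in `L_p`
(`‖N*‖_{L_p} ≤ C ‖[N,N]^{1/2}‖_{L_p}`) holds for all `H`-valued martingales `N` on the given
filtered probability space, then for every martingale `M` the lower bound holds in `L_{2p}`:
`‖[M,M]^{1/2}‖_{L_{2p}} ≲_p ‖M*‖_{L_{2p}}`. Here `[N,N]_n = ∑_{k<n} ‖N_{k+1} - N_k‖²` and
`N*_n = max_{k ≤ n} ‖N_k‖`. -/
theorem stmt_15 {Ω H : Type*} {mΩ : MeasurableSpace Ω} {μ : Measure Ω} [IsProbabilityMeasure μ]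
    [NormedAddCommGroup H] [InnerProductSpace ℝ H] [CompleteSpace H] [SecondCountableTopology H]
    (𝒢 : Filtration ℕ mΩ) (p : ℝ) (hp : 1 ≤ p) (C : ℝ≥0∞) (hC : C ≠ ∞)
    (hupper : ∀ N : ℕ → Ω → H, Martingale N 𝒢 μ → N 0 = 0 → ∀ n : ℕ,
      (∫⁻ ω, (⨆ k ∈ Finset.range (n + 1), (‖N k ω‖₊ : ℝ≥0∞)) ^ p ∂μ) ^ (1 / p) ≤
        C * (∫⁻ ω, (∑ k ∈ Finset.range n,
          (‖N (k + 1) ω - N k ω‖₊ : ℝ≥0∞) ^ 2) ^ (p / 2) ∂μ) ^ (1 / p))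
    (M : ℕ → Ω → H) (hM : Martingale M 𝒢 μ) (h0 : M 0 = 0) :
    ∃ C' : ℝ≥0∞, C' ≠ ∞ ∧ ∀ n : ℕ,
      (∫⁻ ω, (∑ k ∈ Finset.range n,
          (‖M (k + 1) ω - M k ω‖₊ : ℝ≥0∞) ^ 2) ^ p ∂μ) ^ (1 / (2 * p)) ≤
        C' * (∫⁻ ω, (⨆ k ∈ Finset.range (n + 1),
          (‖M k ω‖₊ : ℝ≥0∞)) ^ (2 * p) ∂μ) ^ (1 / (2 * p)) :=
  stmt_15_general 𝒢 p hp C hC hupper M hM h0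
end

section
/- (Davis decomposition, jump bound on K¹) Let M be an H-valued càdlàg martingale, S_t = sup_{s≤t} ‖ΔM_s‖, and define K¹_t = ∑_{s≤t} ΔM_s 1{‖ΔM_s‖ ≥ 2 S_{s−}}. Then every jump time t of K¹ satisfies ‖ΔM_t‖ ≤ 2(S_t − S_{t−}), and consequently the total variation of K¹ on [0,∞) is at most 2 S_∞. -/
/-- Discrete Davis decomposition jump bound: `D k` plays the role of the jump `ΔM_k`
(with `D 0 = 0`), and `S n = max_{k ≤ n} ‖D k‖` is the running supremum of jump sizes. -/
theorem stmt_17 {H : Type*} [NormedAddCommGroup H] [InnerProductSpace ℝ H]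
    (D : ℕ → H) (hD0 : D 0 = 0) (S : ℕ → ℝ)
    (hS : ∀ n, S n = (Finset.range (n + 1)).sup' (by simp) fun k => ‖D k‖) :
    (∀ k, 1 ≤ k → 2 * S (k - 1) ≤ ‖D k‖ → ‖D k‖ ≤ 2 * (S k - S (k - 1))) ∧
    ∀ n, (∑ k ∈ Finset.Icc 1 n, if 2 * S (k - 1) ≤ ‖D k‖ then ‖D k‖ else 0) ≤ 2 * S n := by
  have hS0 : S 0 = 0 := by
    rw [hS 0]
    simp [hD0]
  have hstep : ∀ m, S (m + 1) = max (S m) ‖D (m + 1)‖ := by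
    intro m
    rw [hS m, hS (m + 1)]
    simp [Finset.range_add_one, Finset.sup'_insert, sup_comm]
  have hnonneg : ∀ n, 0 ≤ S n := by
    intro n
    rw [hS n]
    calc (0:ℝ) = ‖D 0‖ := by rw [hD0, norm_zero]
      _ ≤ _ := Finset.le_sup' (fun k => ‖D k‖) (Finset.mem_range.mpr (Nat.succ_pos n))
  have hmono : ∀ m, S m ≤ S (m + 1) := fun m => by rw [hstep m]; exact le_max_left _ _
  have h1 : ∀ k, 1 ≤ k → 2 * S (k - 1) ≤ ‖D k‖ → ‖D k‖ ≤ 2 * (S k - S (k - 1)) := by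
    intro k hk hcond
    obtain ⟨m, rfl⟩ := Nat.exists_eq_add_of_le' hk
    simp only [Nat.add_sub_cancel] at hcond ⊢
    have hSm : 0 ≤ S m := hnonneg m
    have hge : S m ≤ ‖D (m + 1)‖ := by linarith
    have : S (m + 1) = ‖D (m + 1)‖ := by rw [hstep m]; exact max_eq_right hge
    rw [this]; linarith
  refine ⟨h1, ?_⟩
  intro n
  induction n with
  | zero => simp [hS0]
  | succ n ih =>
    rw [Finset.sum_Icc_succ_top (by omega)]
    have hterm : (if 2 * S (n + 1 - 1) ≤ ‖D (n + 1)‖ then ‖D (n + 1)‖ else 0)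
        ≤ 2 * (S (n + 1) - S n) := by
      split_ifs with h
      · simpa using h1 (n + 1) (by omega) h
      · have := hmono n; linarith
    linarith
end
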